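/- arXiv:1005.2766 — 3 statements merged into one kernel-verified Lean document; each statement's English description precedes it below -/
import Mathlib

section
/- Assume the setup for induced semidirect product sequences: {G_i, λ_i} is an inverse sequence of groups, each φ_i is an automorphism of G_i, and φ_{i−1} ∘ λ_i = λ_i ∘ φ_i for all i ≥ 1. Then the induced semidirect product sequence {G_i ⋊_{φ_i} ⟨t_i⟩, λ̄_i} is pro-monomorphic if and only if the base sequence {G_i, λ_i} is pro-monomorphic. -/
universe u

/-- The composite bonding homomorphism `λ_{i,j} : G_j →* G_i` of an inverse sequence of
groups, for `i ≤ j`. -/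
def invSeqComp {G : ℕ → Type u} [∀ i, Group (G i)] (lam : ∀ i, G (i + 1) →* G i)
    {i j : ℕ} (h : i ≤ j) : G j →* G i :=
  Nat.leRecOn h (fun {k} f => f.comp (lam k)) (MonoidHom.id (G i))

/-- An inverse sequence of groups is **pro-monomorphic** if there exists `i` such that for
every `j ≥ i` there exists `k₀ ≥ j` with `ker (λ_{i,k}) = ker (λ_{j,k})` for all `k ≥ k₀`. -/
def ProMono {G : ℕ → Type u} [∀ i, Group (G i)] (lam : ∀ i, G (i + 1) →* G i) : Prop :=
  ∃ i : ℕ, ∀ j : ℕ, ∀ hij : i ≤ j, ∃ k₀ : ℕ, ∃ hjk₀ : j ≤ k₀, ∀ k : ℕ, ∀ hk₀k : k₀ ≤ k,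
    (invSeqComp lam (hij.trans (hjk₀.trans hk₀k))).ker =
      (invSeqComp lam (hjk₀.trans hk₀k)).ker

/-- An inverse sequence of groups is **semistable** (Mittag-Leffler) if for every `i` there
exists `j ≥ i` such that `Im (λ_{i,k}) = Im (λ_{i,j})` for all `k ≥ j`. -/
def Semistable {G : ℕ → Type u} [∀ i, Group (G i)] (lam : ∀ i, G (i + 1) →* G i) : Prop :=
  ∀ i : ℕ, ∃ j : ℕ, ∃ hij : i ≤ j, ∀ k : ℕ, ∀ hjk : j ≤ k,
    (invSeqComp lam (hij.trans hjk)).range = (invSeqComp lam hij).range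

/-- An inverse sequence of groups is **stable** if it is pro-monomorphic and semistable. -/
def Stable {G : ℕ → Type u} [∀ i, Group (G i)] (lam : ∀ i, G (i + 1) →* G i) : Prop :=
  ProMono lam ∧ Semistable lam

/-- The semidirect product `G ⋊_φ ⟨t⟩` of a group `G` with an infinite cyclic group
`⟨t⟩ ≅ ℤ`, where conjugation by `t` acts on `G` as the automorphism `φ`. -/
abbrev ZSemidirect (G : Type u) [Group G] (φ : MulAut G) : Type u :=
  G ⋊[zpowersHom (MulAut G) φ] Multiplicative ℤ

/-- The stable generator `t` of the infinite cyclic factor of `G ⋊_φ ⟨t⟩`. -/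
def ZSemidirect.t (G : Type u) [Group G] (φ : MulAut G) : ZSemidirect G φ :=
  SemidirectProduct.inr (Multiplicative.ofAdd 1)


section AuxLemmas

variable {G : ℕ → Type u} [∀ i, Group (G i)]

lemma invSeqComp_self (lam : ∀ i, G (i + 1) →* G i) {i : ℕ} :
    invSeqComp lam (le_refl i) = MonoidHom.id (G i) :=
  Nat.leRecOn_self _

lemma invSeqComp_succ (lam : ∀ i, G (i + 1) →* G i) {i j : ℕ} (h : i ≤ j) (h2 : i ≤ j + 1) :
    invSeqComp lam h2 = (invSeqComp lam h).comp (lam j) :=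
  Nat.leRecOn_succ h _

end AuxLemmas

/-- Given an inverse sequence of groups `{G_i, λ_i}` and automorphisms
`φ_i ∈ Aut(G_i)` with `φ_{i} ∘ λ_{i+1} = λ_{i+1} ∘ φ_{i+1}`, the induced semidirect product
sequence `{G_i ⋊_{φ_i} ⟨t_i⟩, λ̄_i}` is pro-monomorphic iff the base sequence is. -/
theorem induced_semidirect_sequence_proMono_iff
    {G : ℕ → Type u} [∀ i, Group (G i)] (lam : ∀ i, G (i + 1) →* G i)
    (φ : ∀ i, MulAut (G i))
    (hcomp : ∀ i (g : G (i + 1)), φ i (lam i g) = lam i (φ (i + 1) g))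
    (lamBar : ∀ i, ZSemidirect (G (i + 1)) (φ (i + 1)) →* ZSemidirect (G i) (φ i))
    (hBarOf : ∀ i (g : G (i + 1)),
      lamBar i (SemidirectProduct.inl g) = SemidirectProduct.inl (lam i g))
    (hBarT : ∀ i, lamBar i (ZSemidirect.t (G (i + 1)) (φ (i + 1))) = ZSemidirect.t (G i) (φ i)) :
    ProMono (G := fun i => ZSemidirect (G i) (φ i)) lamBar ↔ ProMono lam := by
  -- `lamBar i` fixes the `Multiplicative ℤ` generator, hence all of `inr`.
  have hBarInr : ∀ i (n : Multiplicative ℤ),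
      lamBar i (SemidirectProduct.inr n) = SemidirectProduct.inr n := by
    intro i n
    have h1 : (SemidirectProduct.inr n : ZSemidirect (G (i+1)) (φ (i+1))) =
        (SemidirectProduct.inr (Multiplicative.ofAdd 1)) ^ (Multiplicative.toAdd n) := by
      rw [← map_zpow]
      congr 1
      rw [← ofAdd_zsmul]
      simp
    rw [h1, map_zpow]
    have h2 := hBarT i
    simp only [ZSemidirect.t] at h2
    rw [h2, ← map_zpow]
    congr 1
    rw [← ofAdd_zsmul]
    simp
  have hBarApply : ∀ i (x : ZSemidirect (G (i+1)) (φ (i+1))),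
      lamBar i x = ⟨lam i x.left, x.right⟩ := by
    intro i x
    have hx : x = SemidirectProduct.inl x.left * SemidirectProduct.inr x.right := by
      ext <;> simp
    rw [hx, map_mul, hBarOf, hBarInr]
    ext <;> simp
  have key : ∀ {i j : ℕ} (h : i ≤ j) (x : ZSemidirect (G j) (φ j)),
      invSeqComp (G := fun i => ZSemidirect (G i) (φ i)) lamBar h x =
        ⟨invSeqComp lam h x.left, x.right⟩ := by
    intro i j h
    induction j, h using Nat.le_induction with
    | base =>
      intro x
      rw [invSeqComp_self, invSeqComp_self]
      ext <;> simp
    | succ j hij ih =>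
      intro x
      rw [invSeqComp_succ (G := fun i => ZSemidirect (G i) (φ i)) lamBar hij,
        invSeqComp_succ lam hij]
      simp only [MonoidHom.comp_apply]
      rw [hBarApply, ih]
  have keyKer : ∀ {i j : ℕ} (h : i ≤ j) (x : ZSemidirect (G j) (φ j)),
      x ∈ (invSeqComp (G := fun i => ZSemidirect (G i) (φ i)) lamBar h).ker ↔
        x.left ∈ (invSeqComp lam h).ker ∧ x.right = 1 := by
    intro i j h x
    rw [MonoidHom.mem_ker, MonoidHom.mem_ker, key]
    constructor
    · intro h1
      exact ⟨congrArg SemidirectProduct.left h1, congrArg SemidirectProduct.right h1⟩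
    · rintro ⟨h1, h2⟩
      ext <;> simpa
  constructor
  · rintro ⟨i, hi⟩
    refine ⟨i, fun j hij => ?_⟩
    obtain ⟨k₀, hjk₀, hk⟩ := hi j hij
    refine ⟨k₀, hjk₀, fun k hk₀k => ?_⟩
    have hk' := hk k hk₀k
    ext g
    have := SetLike.ext_iff.mp hk' (SemidirectProduct.inl g)
    rw [keyKer, keyKer] at this
    simp only [SemidirectProduct.left_inl, SemidirectProduct.right_inl, and_true] at this
    exact this
  · rintro ⟨i, hi⟩
    refine ⟨i, fun j hij => ?_⟩
    obtain ⟨k₀, hjk₀, hk⟩ := hi j hij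
    refine ⟨k₀, hjk₀, fun k hk₀k => ?_⟩
    have hk' := hk k hk₀k
    ext x
    rw [keyKer, keyKer, hk']
end

section
/- Let k ≥ 0 and let n₀, n₁, …, n_k be nonzero integers, and set N = lcm(|n₀|, |n₁|, …, |n_k|). Let Θ be the group with presentation ⟨a, b, s₁, …, s_k | a^{n₀} = b^{n₀}, a^{n_i} = s_i b^{n_i} s_i⁻¹ for i = 1, …, k⟩. Then a^N = b^N in Θ, and a^N lies in the center of Θ. -/
/-- The relators of the presentation
`⟨a, b, s₁, …, s_k ∣ a^{n₀} = b^{n₀}, a^{n_i} = s_i b^{n_i} s_i⁻¹ (1 ≤ i ≤ k)⟩`,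
where the generator `a` is `Sum.inl 0`, the generator `b` is `Sum.inl 1`, and the
generator `s_{i+1}` is `Sum.inr i`. -/
def thetaRels (k : ℕ) (n : Fin (k + 1) → ℤ) : Set (FreeGroup (Fin 2 ⊕ Fin k)) :=
  insert
    (FreeGroup.of (Sum.inl 0) ^ (n 0) * (FreeGroup.of (Sum.inl 1) ^ (n 0))⁻¹)
    (Set.range fun i : Fin k =>
      FreeGroup.of (Sum.inl 0) ^ (n i.succ) *
        (FreeGroup.of (Sum.inr i) * FreeGroup.of (Sum.inl 1) ^ (n i.succ) *
          (FreeGroup.of (Sum.inr i))⁻¹)⁻¹)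

/-- Let `n₀, …, n_k` be nonzero integers, `N = lcm(|n₀|, …, |n_k|)`, and
`Θ = ⟨a, b, s₁, …, s_k ∣ a^{n₀} = b^{n₀}, a^{n_i} = s_i b^{n_i} s_i⁻¹ (1 ≤ i ≤ k)⟩`.
Then `a^N = b^N` in `Θ` and `a^N` is central in `Θ`. -/
theorem presented_group_power_central (k : ℕ) (n : Fin (k + 1) → ℤ)
    (hn : ∀ i, n i ≠ 0) (N : ℕ) (hN : N = Finset.univ.lcm fun i => (n i).natAbs) :
    (PresentedGroup.of (rels := thetaRels k n) (Sum.inl 0)) ^ N =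
        (PresentedGroup.of (rels := thetaRels k n) (Sum.inl 1)) ^ N ∧
      (PresentedGroup.of (rels := thetaRels k n) (Sum.inl 0)) ^ N ∈
        Subgroup.center (PresentedGroup (thetaRels k n)) := by
  set rels := thetaRels k n
  set φ := PresentedGroup.mk rels
  set A : PresentedGroup rels := PresentedGroup.of (Sum.inl 0)
  set B : PresentedGroup rels := PresentedGroup.of (Sum.inl 1)
  set S : Fin k → PresentedGroup rels := fun i => PresentedGroup.of (Sum.inr i)
  -- relators are trivial in the quotient
  have hrel : ∀ r ∈ rels, φ r = 1 := by
    intro r hr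
    exact (QuotientGroup.eq_one_iff r).mpr (Subgroup.subset_normalClosure hr)
  have h0 : A ^ (n 0) = B ^ (n 0) := by
    have := hrel _ (Set.mem_insert _ _)
    rw [map_mul, map_inv, map_zpow, map_zpow] at this
    exact mul_inv_eq_one.mp this
  have hi : ∀ i : Fin k, A ^ (n i.succ) = S i * B ^ (n i.succ) * (S i)⁻¹ := by
    intro i
    have := hrel _ (Set.mem_insert_of_mem _ ⟨i, rfl⟩)
    rw [map_mul, map_inv, map_mul, map_mul, map_inv, map_zpow, map_zpow] at this
    exact mul_inv_eq_one.mp this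
  have hdvd : ∀ i, (n i) ∣ (N : ℤ) := by
    intro i
    have : (n i).natAbs ∣ N := hN ▸ Finset.dvd_lcm (Finset.mem_univ i)
    exact Int.natAbs_dvd.mp (Int.natCast_dvd_natCast.mpr this)
  have hAB : A ^ (N : ℤ) = B ^ (N : ℤ) := by
    obtain ⟨c, hc⟩ := hdvd 0
    rw [hc, zpow_mul, zpow_mul, h0]
  have hS : ∀ i : Fin k, A ^ (N : ℤ) = S i * A ^ (N : ℤ) * (S i)⁻¹ := by
    intro i
    obtain ⟨c, hc⟩ := hdvd i.succ
    calc A ^ (N : ℤ) = (A ^ (n i.succ)) ^ c := by rw [← zpow_mul, ← hc]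
      _ = (S i * B ^ (n i.succ) * (S i)⁻¹) ^ c := by rw [hi i]
      _ = S i * (B ^ (n i.succ)) ^ c * (S i)⁻¹ := by
          simp only [conj_zpow]
      _ = S i * B ^ (N : ℤ) * (S i)⁻¹ := by rw [← zpow_mul, ← hc]
      _ = S i * A ^ (N : ℤ) * (S i)⁻¹ := by rw [hAB]
  have hABn : A ^ N = B ^ N := by
    rw [← zpow_natCast A, ← zpow_natCast B]; exact hAB
  refine ⟨hABn, ?_⟩
  rw [Subgroup.mem_center_iff]
  intro g
  have hg : g ∈ Subgroup.centralizer {A ^ N} := by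
    refine PresentedGroup.generated_by rels _ ?_ g
    intro j
    rw [Subgroup.mem_centralizer_singleton_iff]
    match j with
    | Sum.inl 0 =>
        show A * A ^ N = A ^ N * A
        rw [← pow_succ, ← pow_succ']
    | Sum.inl 1 =>
        show B * A ^ N = A ^ N * B
        rw [hABn, ← pow_succ, ← pow_succ']
    | Sum.inr i =>
        show S i * A ^ N = A ^ N * S i
        have h := hS i
        rw [← zpow_natCast A]
        nth_rewrite 2 [h]
        group
  exact Subgroup.mem_centralizer_singleton_iff.mp hg
end

section
/- Let X be a connected, one-ended, locally compact, separable metric space with pro-monomorphic fundamental group at infinity, let U ⊆ X be a connected neighborhood of infinity such that X ∖ U contains a compact core of X, and let j : X → X be a homeomorphism. Then there exists a neighborhood of infinity W ⊆ X such that for every connected neighborhood of infinity V ⊆ W and every base point p ∈ V: (1) j(V) ⊆ U; and (2) for every loop β in V based at p, β is null-homotopic in U if and only if the loop j ∘ β is null-homotopic in U (equivalently, ker(i_#) = ker(j|_#), where i_# : π₁(V,p) → π₁(U,p) is induced by inclusion and j|_# : π₁(V,p) → π₁(U, j(p)) is induced by the restriction of j). -/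
variable {X : Type*} [TopologicalSpace X]

/-- A subset `N` of a space `X` is a **neighborhood of infinity** if the closure of its
complement is compact. -/
def NbhdOfInfinity (N : Set X) : Prop :=
  IsCompact (closure Nᶜ)

/-- A path whose image lies in a set `S`, viewed as a path in the subspace `S`. -/
def pathInto {p q : X} (γ : Path p q) (S : Set X) (h : ∀ t, γ t ∈ S) :
    Path (⟨p, γ.source ▸ h 0⟩ : S) (⟨q, γ.target ▸ h 1⟩ : S) where
  toFun t := ⟨γ t, h t⟩
  continuous_toFun := γ.continuous.subtype_mk h
  source' := Subtype.ext γ.source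
  target' := Subtype.ext γ.target

/-- A loop `γ` at `p` whose image lies in `S ⊆ X` is **null-homotopic in `S`** if, viewed as
a loop in the subspace `S`, it is path-homotopic to the constant loop. -/
def NullHomotopicIn {p : X} (γ : Path p p) (S : Set X) (h : ∀ t, γ t ∈ S) : Prop :=
  Path.Homotopic (pathInto γ S h) (Path.refl (⟨p, γ.source ▸ h 0⟩ : S))

/-- A **compact core** of `X`: a compact set `C` such that for every compact `D ⊇ C` there is
a compact `E` such that every loop in `X ∖ E` that is null-homotopic in `X ∖ C` is
null-homotopic in `X ∖ D`. -/
def IsCompactCore (C : Set X) : Prop :=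
  IsCompact C ∧ ∀ D : Set X, IsCompact D → C ⊆ D → ∃ E : Set X, IsCompact E ∧
    ∀ (p : X) (γ : Path p p) (_hE : ∀ t, γ t ∈ Eᶜ) (hC : ∀ t, γ t ∈ Cᶜ)
      (hD : ∀ t, γ t ∈ Dᶜ), NullHomotopicIn γ Cᶜ hC → NullHomotopicIn γ Dᶜ hD

/-- `X` has **pro-monomorphic fundamental group at infinity** if it contains a compact
core. -/
def ProMonoAtInfinity (X : Type*) [TopologicalSpace X] : Prop :=
  ∃ C : Set X, IsCompactCore C

/-- `X` is **one-ended** if it is noncompact and every compact set is disjoint from some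
connected neighborhood of infinity. -/
def OneEnded (X : Type*) [TopologicalSpace X] : Prop :=
  ¬ CompactSpace X ∧ ∀ C : Set X, IsCompact C →
    ∃ N : Set X, NbhdOfInfinity N ∧ IsConnected N ∧ N ⊆ Cᶜ

lemma nullHomotopicIn_map {Y : Type*} [TopologicalSpace Y]
    {p : X} (γ : Path p p) {f : X → Y} (hf : Continuous f)
    (S : Set X) (T : Set Y) (hS : ∀ t, γ t ∈ S) (hfT : ∀ x ∈ S, f x ∈ T)
    (h : NullHomotopicIn γ S hS) :
    NullHomotopicIn (γ.map hf) T (fun t => hfT _ (hS t)) := by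
  let g : S → T := fun x => ⟨f x, hfT x x.2⟩
  have hg : Continuous g := (hf.comp continuous_subtype_val).subtype_mk _
  have key : pathInto (γ.map hf) T (fun t => hfT _ (hS t)) =
      (pathInto γ S hS).map hg := by
    ext t
    rfl
  have hrefl : (Path.refl (⟨p, γ.source ▸ hS 0⟩ : S)).map hg =
      Path.refl (⟨f p, ((γ.map hf).source) ▸ hfT _ (hS 0)⟩ : T) := by
    ext t
    rfl
  unfold NullHomotopicIn
  rw [key, ← hrefl]
  exact h.map ⟨g, hg⟩

lemma nullHomotopicIn_mono {p : X} (γ : Path p p) {S T : Set X} (hST : S ⊆ T)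
    (hS : ∀ t, γ t ∈ S) (h : NullHomotopicIn γ S hS) :
    NullHomotopicIn γ T (fun t => hST (hS t)) := by
  let g : S → T := fun x => ⟨x.1, hST x.2⟩
  have hg : Continuous g := continuous_subtype_val.subtype_mk _
  have key : pathInto γ T (fun t => hST (hS t)) = (pathInto γ S hS).map hg := by
    ext t; rfl
  have hrefl : (Path.refl (⟨p, γ.source ▸ hS 0⟩ : S)).map hg =
      Path.refl (⟨p, γ.source ▸ hST (hS 0)⟩ : T) := by
    ext t; rfl
  unfold NullHomotopicIn
  rw [key, ← hrefl]
  exact h.map ⟨g, hg⟩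

lemma nullHomotopicIn_of_eq {p q : X} (hpq : p = q) (γ : Path p p) (δ : Path q q)
    (hfun : ∀ t, γ t = δ t) (S : Set X) (hγ : ∀ t, γ t ∈ S) (hδ : ∀ t, δ t ∈ S)
    (h : NullHomotopicIn γ S hγ) : NullHomotopicIn δ S hδ := by
  subst hpq
  have : γ = δ := by ext t; exact hfun t
  subst this
  exact h

/-- The preimage of a compact core under a self-homeomorphism is a compact core. -/
lemma isCompactCore_preimage (j : X ≃ₜ X) {C : Set X} (h : IsCompactCore C) :
    IsCompactCore (⇑j ⁻¹' C) := by
  obtain ⟨hc, hcore⟩ := h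
  refine ⟨j.isCompact_preimage.mpr hc, ?_⟩
  intro D hD hCD
  obtain ⟨E, hE, hprop⟩ := hcore (⇑j '' D) (hD.image j.continuous)
    (fun x hx => ⟨j.symm x, hCD (by simp [hx]), j.apply_symm_apply x⟩)
  refine ⟨⇑j ⁻¹' E, j.isCompact_preimage.mpr hE, ?_⟩
  intro p γ hEc hCc hDc hnull
  have hCc' : ∀ t, (γ.map j.continuous) t ∈ Cᶜ := fun t => hCc t
  have h1 : NullHomotopicIn (γ.map j.continuous) Cᶜ hCc' :=
    nullHomotopicIn_map γ j.continuous _ Cᶜ hCc (fun x hx => hx) hnull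
  have hEc' : ∀ t, (γ.map j.continuous) t ∈ Eᶜ := fun t => hEc t
  have hDc' : ∀ t, (γ.map j.continuous) t ∈ (⇑j '' D)ᶜ := by
    intro t
    rintro ⟨x, hx, hxe⟩
    exact hDc t (j.injective hxe ▸ hx)
  have h2 := hprop (j p) (γ.map j.continuous) hEc' hCc' hDc' h1
  have h3 := nullHomotopicIn_map (γ.map j.continuous) j.symm.continuous _ Dᶜ hDc'
    (fun y hy hyD => hy ⟨j.symm y, hyD, j.apply_symm_apply y⟩) h2
  exact nullHomotopicIn_of_eq (j.symm_apply_apply p) _ γ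
    (fun t => j.symm_apply_apply _) Dᶜ _ hDc h3

/-- Let `X` be a connected, one-ended, locally compact, separable metric
space with pro-monomorphic fundamental group at infinity, let `U` be a connected neighborhood
of infinity whose complement contains a compact core, and let `j : X → X` be a homeomorphism.
Then there is a neighborhood of infinity `W` such that every connected neighborhood of
infinity `V ⊆ W` satisfies `j(V) ⊆ U`, and for every base point `p ∈ V`, a loop `β` in `V`
based at `p` is null-homotopic in `U` if and only if `j ∘ β` is null-homotopic in `U`. -/
theorem small_nbhds_ker_eq_ker
    {X : Type*} [MetricSpace X] [TopologicalSpace.SeparableSpace X]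
    [ConnectedSpace X] [LocallyCompactSpace X]
    (hone : OneEnded X) (hpm : ProMonoAtInfinity X)
    (U : Set X) (hU : NbhdOfInfinity U) (hUconn : IsConnected U)
    (hUcore : ∃ C : Set X, IsCompactCore C ∧ C ⊆ Uᶜ)
    (j : X ≃ₜ X) :
    ∃ W : Set X, NbhdOfInfinity W ∧
      ∀ V : Set X, V ⊆ W → NbhdOfInfinity V → IsConnected V →
        -- (1) `j(V) ⊆ U`:
        (⇑j '' V ⊆ U) ∧
        -- (2) for every base point `p ∈ V` and every loop `β` in `V` based at `p`,
        -- `β` is null-homotopic in `U` iff `j ∘ β` is null-homotopic in `U`: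
        ∀ (p : X), p ∈ V → ∀ (β : Path p p), (∀ t, β t ∈ V) →
          ∀ (hβU : ∀ t, β t ∈ U) (hjβU : ∀ t, (β.map j.continuous) t ∈ U),
            (NullHomotopicIn β U hβU ↔ NullHomotopicIn (β.map j.continuous) U hjβU) := by
  obtain ⟨C, hCcore, hCU⟩ := hUcore
  obtain ⟨hCcpt, hcore⟩ := hCcore
  have hUc : U ⊆ Cᶜ := fun x hx hxC => hCU hxC hx
  have hKc : IsCompact (⇑j ⁻¹' (closure Uᶜ)) := j.isCompact_preimage.mpr hU
  -- core applied to D₁ = C ∪ j⁻¹(closure Uᶜ)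
  obtain ⟨E₁, hE₁cpt, hE₁⟩ := hcore (C ∪ ⇑j ⁻¹' (closure Uᶜ)) (hCcpt.union hKc)
    Set.subset_union_left
  -- the preimage core applied to D₃ = j⁻¹(C) ∪ closure Uᶜ
  obtain ⟨hC'cpt, hcore'⟩ := isCompactCore_preimage j ⟨hCcpt, hcore⟩
  obtain ⟨E₃, hE₃cpt, hE₃⟩ := hcore' (⇑j ⁻¹' C ∪ closure Uᶜ) (hC'cpt.union hU)
    Set.subset_union_left
  refine ⟨(E₁ ∪ E₃ ∪ ⇑j ⁻¹' (closure Uᶜ) ∪ closure Uᶜ)ᶜ, ?_, ?_⟩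
  · unfold NbhdOfInfinity
    rw [compl_compl]
    rw [IsClosed.closure_eq (((hE₁cpt.isClosed.union hE₃cpt.isClosed).union
      hKc.isClosed).union isClosed_closure)]
    exact ((hE₁cpt.union hE₃cpt).union hKc).union hU
  · intro V hVW _ _
    have hVE₁ : ∀ x ∈ V, x ∉ E₁ := fun x hx hE =>
      hVW hx (Or.inl (Or.inl (Or.inl hE)))
    have hVE₃ : ∀ x ∈ V, x ∉ E₃ := fun x hx hE =>
      hVW hx (Or.inl (Or.inl (Or.inr hE)))
    have hVjU : ∀ x ∈ V, j x ∉ closure Uᶜ := fun x hx hE =>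
      hVW hx (Or.inl (Or.inr hE))
    have hVU : ∀ x ∈ V, x ∉ closure Uᶜ := fun x hx hE =>
      hVW hx (Or.inr hE)
    have hjVU : ⇑j '' V ⊆ U := by
      rintro _ ⟨x, hx, rfl⟩
      by_contra hxu
      exact hVjU x hx (subset_closure hxu)
    refine ⟨hjVU, ?_⟩
    intro p hp β hβV hβU hjβU
    constructor
    · intro h
      -- β null in U ⊆ Cᶜ
      have h1 : NullHomotopicIn β Cᶜ (fun t => hUc (hβU t)) :=
        nullHomotopicIn_mono β hUc hβU h
      have hβE : ∀ t, β t ∈ E₁ᶜ := fun t => hVE₁ _ (hβV t)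
      have hβD : ∀ t, β t ∈ (C ∪ ⇑j ⁻¹' (closure Uᶜ))ᶜ := by
        intro t
        rintro (hc | hc)
        · exact hUc (hβU t) hc
        · exact hVjU _ (hβV t) hc
      have h2 := hE₁ p β hβE (fun t => hUc (hβU t)) hβD h1
      -- D₁ᶜ ⊆ j⁻¹(U); push forward along j
      have hsub : ∀ x ∈ (C ∪ ⇑j ⁻¹' (closure Uᶜ))ᶜ, j x ∈ U := by
        intro x hx
        by_contra hxu
        exact hx (Or.inr (subset_closure hxu))
      exact nullHomotopicIn_map β j.continuous _ U hβD hsub h2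
    · intro h
      -- pull back along j.symm : jβ null in U gives β null in j⁻¹(U)
      have hjU : ∀ y ∈ U, j.symm y ∈ ⇑j ⁻¹' U := by
        intro y hy
        show j (j.symm y) ∈ U
        rw [j.apply_symm_apply]
        exact hy
      have h0 := nullHomotopicIn_map (β.map j.continuous) j.symm.continuous U
        (⇑j ⁻¹' U) hjβU hjU h
      have hβjU : ∀ t, β t ∈ ⇑j ⁻¹' U := fun t => hjβU t
      have h1 : NullHomotopicIn β (⇑j ⁻¹' U) hβjU :=
        nullHomotopicIn_of_eq (j.symm_apply_apply p) _ β
          (fun t => j.symm_apply_apply _) _ _ hβjU h0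
      -- j⁻¹(U) ⊆ (j⁻¹ C)ᶜ
      have hsub1 : ⇑j ⁻¹' U ⊆ (⇑j ⁻¹' C)ᶜ := fun x hx hxC => hCU hxC hx
      have h2 : NullHomotopicIn β (⇑j ⁻¹' C)ᶜ (fun t => hsub1 (hβjU t)) :=
        nullHomotopicIn_mono β hsub1 hβjU h1
      have hβE : ∀ t, β t ∈ E₃ᶜ := fun t => hVE₃ _ (hβV t)
      have hβD : ∀ t, β t ∈ (⇑j ⁻¹' C ∪ closure Uᶜ)ᶜ := by
        intro t
        rintro (hc | hc)
        · exact hsub1 (hβjU t) hc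
        · exact hVU _ (hβV t) hc
      have h3 := hE₃ p β hβE (fun t => hsub1 (hβjU t)) hβD h2
      have hsub2 : (⇑j ⁻¹' C ∪ closure Uᶜ)ᶜ ⊆ U := by
        intro x hx
        by_contra hxu
        exact hx (Or.inr (subset_closure hxu))
      exact nullHomotopicIn_mono β hsub2 hβD h3
end
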